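/- Let H be a finite 3-uniform hypergraph such that for every nonempty subset S of V(H), the number of hyperedges of H entirely contained in S is strictly less than |S|. Then H is 3-colorable. -/
import Mathlib


/-- `c` is a proper 3-coloring of the 3-uniform hypergraph with hyperedge set `H`:
no hyperedge is monochromatic. -/
def IsProperColoring3 {V : Type*} (H : Finset (Finset V)) (c : V → Fin 3) : Prop :=
  ∀ e ∈ H, ∃ x ∈ e, ∃ y ∈ e, c x ≠ c y

lemma aux_colorable {V : Type*} [DecidableEq V] :
    ∀ (n : ℕ) (W : Finset V) (H : Finset (Finset V)), W.card ≤ n →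
    (∀ e ∈ H, e.card = 3) → (∀ e ∈ H, e ⊆ W) →
    (∀ S : Finset V, S.Nonempty → (H.filter fun e => e ⊆ S).card < S.card) →
    ∃ c : V → Fin 3, IsProperColoring3 H c := by
  classical
  intro n
  induction n with
  | zero =>
    intro W H hW h3 hsub _
    refine ⟨fun _ => 0, fun e he => ?_⟩
    have hWe : W = ∅ := Finset.card_eq_zero.mp (Nat.le_antisymm hW (Nat.zero_le _))
    have : e ⊆ (∅ : Finset V) := hWe ▸ hsub e he
    have : e = ∅ := Finset.subset_empty.mp this
    have h3' := h3 e he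
    rw [this] at h3'
    simp at h3'
  | succ n ih =>
    intro W H hW h3 hsub hsp
    rcases W.eq_empty_or_nonempty with hWe | hWne
    · refine ⟨fun _ => 0, fun e he => ?_⟩
      have : e ⊆ (∅ : Finset V) := hWe ▸ hsub e he
      have he' : e = ∅ := Finset.subset_empty.mp this
      have := h3 e he
      rw [he'] at this
      simp at this
    -- find a vertex of degree ≤ 2
    have hHW : (H.filter fun e => e ⊆ W) = H :=
      Finset.filter_true_of_mem (fun e he => hsub e he)
    have hHlt : H.card < W.card := by
      have := hsp W hWne
      rwa [hHW] at this
    obtain ⟨v, hvW, hdeg⟩ : ∃ v ∈ W, (H.filter fun e => v ∈ e).card ≤ 2 := by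
      by_contra hcon
      push_neg at hcon
      have hsum : ∑ v ∈ W, (H.filter fun e => v ∈ e).card
          = ∑ e ∈ H, (W.filter fun v => v ∈ e).card := by
        simp only [Finset.card_filter]
        exact Finset.sum_comm
      have h1 : 3 * W.card ≤ ∑ v ∈ W, (H.filter fun e => v ∈ e).card := by
        calc 3 * W.card = ∑ _v ∈ W, 3 := by rw [Finset.sum_const, Nat.mul_comm]; rfl
        _ ≤ _ := Finset.sum_le_sum fun v hv => hcon v hv
      have h2 : ∑ e ∈ H, (W.filter fun v => v ∈ e).card ≤ 3 * H.card := by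
        calc ∑ e ∈ H, (W.filter fun v => v ∈ e).card ≤ ∑ e ∈ H, 3 := by
              refine Finset.sum_le_sum fun e he => ?_
              have hsub' : (W.filter fun v => v ∈ e) ⊆ e := fun x hx =>
                (Finset.mem_filter.mp hx).2
              have hle := Finset.card_le_card hsub'
              rw [h3 e he] at hle
              exact hle
        _ = 3 * H.card := by rw [Finset.sum_const, Nat.mul_comm]; rfl
      omega
    set F := H.filter (fun e => v ∈ e) with hF
    set H' := H.filter (fun e => v ∉ e) with hH'
    have hH'sub : H' ⊆ H := Finset.filter_subset _ _
    obtain ⟨c, hc⟩ : ∃ c : V → Fin 3, IsProperColoring3 H' c := by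
      refine ih (W.erase v) H' ?_ (fun e he => h3 e (hH'sub he)) ?_ ?_
      · have : (W.erase v).card = W.card - 1 := Finset.card_erase_of_mem hvW
        omega
      · intro e he x hx
        obtain ⟨heH, hv⟩ := Finset.mem_filter.mp he
        exact Finset.mem_erase.mpr ⟨fun h => hv (h ▸ hx), hsub e heH hx⟩
      · intro S hS
        refine lt_of_le_of_lt (Finset.card_le_card ?_) (hsp S hS)
        exact Finset.filter_subset_filter _ hH'sub
    -- choose a color for v avoiding the ≤ 2 monochromatic constraints
    set B : Finset (Fin 3) :=
      F.image (fun e => if h : (e.erase v).Nonempty then c h.choose else 0) with hB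
    have hBcard : B.card < 3 :=
      lt_of_le_of_lt (le_trans (Finset.card_image_le) hdeg) (by norm_num)
    obtain ⟨k, hk⟩ : ∃ k : Fin 3, k ∉ B := by
      by_contra hcon
      push_neg at hcon
      have : (Finset.univ : Finset (Fin 3)) ⊆ B := fun x _ => hcon x
      have := Finset.card_le_card this
      simp at this
      omega
    refine ⟨Function.update c v k, fun e he => ?_⟩
    by_cases hv : v ∈ e
    · have heF : e ∈ F := Finset.mem_filter.mpr ⟨he, hv⟩
      have hne : (e.erase v).Nonempty := by
        rw [← Finset.card_pos, Finset.card_erase_of_mem hv, h3 e he]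
        norm_num
      set w := hne.choose with hw
      have hwmem : w ∈ e.erase v := hne.choose_spec
      have hwne : w ≠ v := (Finset.mem_erase.mp hwmem).1
      have hwe : w ∈ e := (Finset.mem_erase.mp hwmem).2
      have hcwB : c w ∈ B := by
        rw [hB]
        refine Finset.mem_image.mpr ⟨e, heF, ?_⟩
        rw [dif_pos hne]
      refine ⟨v, hv, w, hwe, ?_⟩
      rw [Function.update_self, Function.update_of_ne hwne]
      exact fun h => hk (h ▸ hcwB)
    · have heH' : e ∈ H' := Finset.mem_filter.mpr ⟨he, hv⟩
      obtain ⟨x, hx, y, hy, hxy⟩ := hc e heH'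
      have hxv : x ≠ v := fun h => hv (h ▸ hx)
      have hyv : y ≠ v := fun h => hv (h ▸ hy)
      refine ⟨x, hx, y, hy, ?_⟩
      rwa [Function.update_of_ne hxv, Function.update_of_ne hyv]

/-- If in a finite 3-uniform hypergraph `H`, every nonempty vertex subset `S`
contains strictly fewer than `|S|` hyperedges, then `H` is 3-colorable. -/
theorem colorable_of_sparse {V : Type*} [Fintype V] [DecidableEq V]
    (H : Finset (Finset V)) (h3 : ∀ e ∈ H, e.card = 3)
    (hsparse : ∀ S : Finset V, S.Nonempty → (H.filter fun e => e ⊆ S).card < S.card) :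
    ∃ c : V → Fin 3, IsProperColoring3 H c := by
  classical
  exact aux_colorable (Finset.univ.card) Finset.univ H le_rfl h3
    (fun e _ => e.subset_univ) hsparse
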